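/- arXiv:math/9406211 — 2 statements merged into one kernel-verified Lean document; each statement's English description precedes it below -/
import Mathlib

section
/- Let $P$ be a positive bounded linear operator on $L_r(\Omega,\mathcal F,\mu)$ for a sigma-finite measure space and $1\le r<\infty$, let $1\le p<\infty$, and let $f_1,\dots,f_n\in L_r(\mu)$. Then almost everywhere $\big(\sum_{k=1}^n |P f_k|^p\big)^{1/p} \le P\big(\big(\sum_{k=1}^n |f_k|^p\big)^{1/p}\big)$. -/
open MeasureTheory Filter Topology Complex
open scoped ComplexOrder

noncomputable section



private def ratC (q : ℚ × ℚ) : ℂ := ((q.1 : ℝ) : ℂ) + ((q.2 : ℝ) : ℂ) * Complex.I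

private lemma norm_piLp_eq {p : ℝ} (hp : 1 ≤ p) {n : ℕ} (b : Fin n → ℂ) :
    ‖(WithLp.equiv (ENNReal.ofReal p) (Fin n → ℂ)).symm b‖
      = (∑ k, ‖b k‖ ^ p) ^ (1 / p) := by
  have hp0 : (0:ℝ) < p := by linarith
  have h0 : 0 < (ENNReal.ofReal p).toReal := by
    rw [ENNReal.toReal_ofReal hp0.le]; exact hp0
  rw [PiLp.norm_eq_sum h0]
  simp [ENNReal.toReal_ofReal hp0.le, WithLp.equiv_symm_apply]

private lemma abs_le_Np {p : ℝ} (hp : 1 ≤ p) {n : ℕ} (b : Fin n → ℂ) (k : Fin n) :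
    ‖b k‖ ≤ (∑ j, ‖b j‖ ^ p) ^ (1 / p) := by
  have hp0 : (0:ℝ) < p := by linarith
  have h1 : ‖b k‖ ^ p ≤ ∑ j, ‖b j‖ ^ p :=
    Finset.single_le_sum (fun j _ => Real.rpow_nonneg (norm_nonneg _) p)
      (Finset.mem_univ k)
  calc ‖b k‖ = ((‖b k‖) ^ p) ^ (1/p) := by
        rw [one_div, Real.rpow_rpow_inv (norm_nonneg _) hp0.ne']
    _ ≤ (∑ j, ‖b j‖ ^ p) ^ (1/p) :=
        Real.rpow_le_rpow (Real.rpow_nonneg (norm_nonneg _) p) h1 (by positivity)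

private lemma pointwise_dual {p : ℝ} (hp : 1 ≤ p) {n : ℕ} (a : Fin n → ℂ) {t : ℝ} (ht : 0 ≤ t)
    (H : ∀ (q : Fin n → ℚ × ℚ) (s : ℚ), (0:ℝ) ≤ (s:ℝ) →
      (∀ b : Fin n → ℂ, (∑ k, ratC (q k) * b k).re
          ≤ (s:ℝ) * (∑ k, ‖b k‖ ^ p) ^ (1 / p)) →
      (∑ k, ratC (q k) * a k).re ≤ (s:ℝ) * t) :
    (∑ k, ‖a k‖ ^ p) ^ (1 / p) ≤ t := by
  have hp0 : (0:ℝ) < p := by linarith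
  by_cases ha : a = 0
  · subst ha
    simp only [Pi.zero_apply, norm_zero, Real.zero_rpow hp0.ne', Finset.sum_const,
      smul_zero]
    rw [Real.zero_rpow (by positivity : (1/p) ≠ 0)]
    exact ht
  haveI : Fact (1 ≤ ENNReal.ofReal p) := ⟨by rwa [ENNReal.one_le_ofReal]⟩
  set toE : (Fin n → ℂ) → PiLp (ENNReal.ofReal p) (fun _ : Fin n => ℂ) :=
    ⇑(WithLp.equiv (ENNReal.ofReal p) (Fin n → ℂ)).symm with htoE
  have htoEa : toE a ≠ 0 := by
    intro hcon
    apply ha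
    have := congrArg (WithLp.equiv (ENNReal.ofReal p) (Fin n → ℂ)) hcon
    simpa [htoE] using this
  obtain ⟨φ, hφ1, hφ2⟩ := exists_dual_vector (𝕜 := ℂ) (toE a) (norm_ne_zero_iff.mpr htoEa)
  set cs : Fin n → ℂ := fun k => φ (toE (Pi.single k 1)) with hcs
  have hrep : ∀ b : Fin n → ℂ, (∑ k, cs k * b k) = φ (toE b) := by
    intro b
    have hb : toE b = ∑ k, b k • toE (Pi.single k 1) := by
      have h1 : (∑ k, Pi.single k (b k) : Fin n → ℂ) = b := Finset.univ_sum_single b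
      have h2 := map_sum ((WithLp.linearEquiv (ENNReal.ofReal p) ℂ (Fin n → ℂ)).symm)
          (fun k => (Pi.single k (b k) : Fin n → ℂ)) Finset.univ
      rw [h1] at h2
      show (WithLp.linearEquiv (ENNReal.ofReal p) ℂ (Fin n → ℂ)).symm b = ∑ k, b k • (WithLp.linearEquiv (ENNReal.ofReal p) ℂ (Fin n → ℂ)).symm (Pi.single k 1)
      rw [h2]
      congr 1; funext k
      rw [← _root_.map_smul]
      congr 1
      rw [← Pi.single_smul, smul_eq_mul, mul_one]
    rw [hb, map_sum]
    simp [smul_eq_mul, mul_comm, hcs]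
  have key1 : ∀ b : Fin n → ℂ,
      (∑ k, cs k * b k).re ≤ (∑ k, ‖b k‖ ^ p) ^ (1 / p) := by
    intro b
    rw [hrep b]
    calc (φ (toE b)).re ≤ ‖φ (toE b)‖ := Complex.re_le_norm _
      _ ≤ ‖φ‖ * ‖toE b‖ := by exact φ.le_opNorm _
      _ = (∑ k, ‖b k‖ ^ p) ^ (1 / p) := by
          rw [hφ1, one_mul]; exact norm_piLp_eq hp b
  have key2 : (∑ k, cs k * a k).re = (∑ k, ‖a k‖ ^ p) ^ (1 / p) := by
    rw [hrep a, hφ2]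
    simp [show ‖toE a‖ = _ from norm_piLp_eq hp a]
  set N : ℝ := (∑ k, ‖a k‖ ^ p) ^ (1 / p) with hN
  set S : ℝ := ∑ k, ‖a k‖ with hS
  have hS0 : 0 ≤ S := Finset.sum_nonneg fun k _ => norm_nonneg _
  have main : ∀ ε : ℝ, 0 < ε → N ≤ t + ε := by
    intro ε hε
    set D : ℝ := n * t + t + S + 1 with hD
    have hD0 : 0 < D := by positivity
    set δ : ℝ := ε / D with hδ
    have hδ0 : 0 < δ := div_pos hε hD0
    have hq : ∀ k, ∃ q : ℚ × ℚ, ‖ratC q - cs k‖ ≤ δ := by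
      intro k
      obtain ⟨q1, h1⟩ := exists_rat_near (cs k).re (half_pos hδ0)
      obtain ⟨q2, h2⟩ := exists_rat_near (cs k).im (half_pos hδ0)
      refine ⟨(q1, q2), ?_⟩
      have hre : (ratC (q1, q2) - cs k).re = (q1:ℝ) - (cs k).re := by simp [ratC]
      have him : (ratC (q1, q2) - cs k).im = (q2:ℝ) - (cs k).im := by simp [ratC]
      calc ‖ratC (q1, q2) - cs k‖
          ≤ |(ratC (q1, q2) - cs k).re| + |(ratC (q1, q2) - cs k).im| :=
            Complex.norm_le_abs_re_add_abs_im _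
        _ ≤ δ := by
            rw [hre, him, abs_sub_comm ((q1:ℝ)) _, abs_sub_comm ((q2:ℝ)) _]
            have := le_of_lt h1; have := le_of_lt h2; linarith
    choose q hqq using hq
    obtain ⟨s, hs1, hs2⟩ := exists_rat_btwn (show (1 + n*δ : ℝ) < 1 + n*δ + δ by linarith)
    have hnδ : (0:ℝ) ≤ (n:ℝ) * δ := by positivity
    have hs0 : (0:ℝ) ≤ (s:ℝ) := by linarith
    have hU : ∀ b : Fin n → ℂ, (∑ k, ratC (q k) * b k).re
        ≤ (s:ℝ) * (∑ k, ‖b k‖ ^ p) ^ (1/p) := by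
      intro b
      set Nb : ℝ := (∑ k, ‖b k‖ ^ p) ^ (1/p) with hNb
      have hNb0 : 0 ≤ Nb :=
        Real.rpow_nonneg (Finset.sum_nonneg fun k _ =>
          Real.rpow_nonneg (norm_nonneg _) _) _
      have hsplit : (∑ k, ratC (q k) * b k)
          = (∑ k, cs k * b k) + ∑ k, (ratC (q k) - cs k) * b k := by
        rw [← Finset.sum_add_distrib]; congr 1; funext k; ring
      rw [hsplit, Complex.add_re]
      have h2 : (∑ k, (ratC (q k) - cs k) * b k).re ≤ (n:ℝ) * δ * Nb := by
        calc (∑ k, (ratC (q k) - cs k) * b k).re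
            ≤ ‖∑ k, (ratC (q k) - cs k) * b k‖ := Complex.re_le_norm _
          _ ≤ ∑ k, ‖(ratC (q k) - cs k) * b k‖ := norm_sum_le _ _
          _ ≤ ∑ _k : Fin n, δ * Nb := by
              apply Finset.sum_le_sum
              intro k _
              rw [norm_mul]
              exact mul_le_mul (hqq k) (abs_le_Np hp b k) (norm_nonneg _) hδ0.le
          _ = (n:ℝ) * δ * Nb := by
              rw [Finset.sum_const, Finset.card_univ, Fintype.card_fin, nsmul_eq_mul]; ring
      have h1 := key1 b
      have : (1 + (n:ℝ)*δ) * Nb ≤ (s:ℝ) * Nb := mul_le_mul_of_nonneg_right hs1.le hNb0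
      nlinarith [h1, h2]
    have hHa := H q s hs0 hU
    have hsplita : (∑ k, ratC (q k) * a k)
        = (∑ k, cs k * a k) + ∑ k, (ratC (q k) - cs k) * a k := by
      rw [← Finset.sum_add_distrib]; congr 1; funext k; ring
    have herr : |(∑ k, (ratC (q k) - cs k) * a k).re| ≤ δ * S := by
      calc |(∑ k, (ratC (q k) - cs k) * a k).re|
          ≤ ‖∑ k, (ratC (q k) - cs k) * a k‖ := Complex.abs_re_le_norm _
        _ ≤ ∑ k, ‖(ratC (q k) - cs k) * a k‖ := norm_sum_le _ _
        _ ≤ ∑ k, δ * ‖a k‖ := by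
            apply Finset.sum_le_sum
            intro k _
            rw [norm_mul]
            exact mul_le_mul_of_nonneg_right (hqq k) (norm_nonneg _)
        _ = δ * S := by rw [hS, Finset.mul_sum]
    have hlow : N - δ * S ≤ (∑ k, ratC (q k) * a k).re := by
      rw [hsplita, Complex.add_re, key2]
      have := (abs_le.mp herr).1
      linarith
    have hst : (s:ℝ) * t ≤ (1 + (n:ℝ)*δ + δ) * t := mul_le_mul_of_nonneg_right hs2.le ht
    have hδD : δ * D = ε := div_mul_cancel₀ ε hD0.ne'
    have hfin : δ * ((n:ℝ)*t + t + S) ≤ δ * D := by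
      apply mul_le_mul_of_nonneg_left _ hδ0.le
      rw [hD]; linarith
    nlinarith [hHa, hlow, hst, hδD, hfin]
  by_contra hcon
  push_neg at hcon
  have := main ((N - t)/2) (by linarith)
  linarith

private lemma lipschitz_reC : LipschitzWith 1 (fun z : ℂ => ((z.re : ℝ) : ℂ)) := by
  apply LipschitzWith.of_dist_le_mul
  intro x y
  rw [NNReal.coe_one, one_mul, Complex.isometry_ofReal.dist_eq _ _, Real.dist_eq,
    Complex.dist_eq]
  calc |x.re - y.re| = |(x - y).re| := by rw [Complex.sub_re]
    _ ≤ ‖x - y‖ := Complex.abs_re_le_norm _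

private lemma lipschitz_posC : LipschitzWith 1 (fun z : ℂ => ((max z.re 0 : ℝ) : ℂ)) := by
  apply LipschitzWith.of_dist_le_mul
  intro x y
  rw [NNReal.coe_one, one_mul, Complex.isometry_ofReal.dist_eq _ _, Real.dist_eq,
    Complex.dist_eq]
  calc |max x.re 0 - max y.re 0| ≤ |x.re - y.re| := abs_max_sub_max_le_abs _ _ _
    _ = |(x - y).re| := by rw [Complex.sub_re]
    _ ≤ ‖x - y‖ := Complex.abs_re_le_norm _

private def reL {Ω : Type*} [MeasurableSpace Ω] {μ : Measure Ω} {r : ENNReal}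
    (u : Lp ℂ r μ) : Lp ℂ r μ :=
  lipschitz_reC.compLp (by simp) u

private lemma reL_coe {Ω : Type*} [MeasurableSpace Ω] {μ : Measure Ω} {r : ENNReal}
    (u : Lp ℂ r μ) : ⇑(reL u) =ᵐ[μ] fun ω => (((u ω).re : ℝ) : ℂ) :=
  lipschitz_reC.coeFn_compLp _ u

private def posL {Ω : Type*} [MeasurableSpace Ω] {μ : Measure Ω} {r : ENNReal}
    (u : Lp ℂ r μ) : Lp ℂ r μ :=
  lipschitz_posC.compLp (by simp) u

private lemma posL_coe {Ω : Type*} [MeasurableSpace Ω] {μ : Measure Ω} {r : ENNReal}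
    (u : Lp ℂ r μ) : ⇑(posL u) =ᵐ[μ] fun ω => ((max (u ω).re 0 : ℝ) : ℂ) :=
  lipschitz_posC.coeFn_compLp _ u

private lemma Lp_coeFn_sum {Ω : Type*} [MeasurableSpace Ω] {μ : Measure Ω} {r : ENNReal}
    {ι : Type*} (s : Finset ι) (F : ι → Lp ℂ r μ) :
    ⇑(∑ i ∈ s, F i) =ᵐ[μ] fun ω => ∑ i ∈ s, F i ω := by
  classical
  induction s using Finset.induction with
  | empty => exact Lp.coeFn_zero (E := ℂ) (p := r) (μ := μ)
  | insert i s' hne ih =>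
      have h1 := Lp.coeFn_add (F i) (∑ j ∈ s', F j)
      rw [Finset.sum_insert hne]
      filter_upwards [h1, ih] with ω e1 e2
      rw [Finset.sum_insert hne]
      simp only [Pi.add_apply] at e1
      rw [e1, e2]

/-- Let `P` be a positive bounded linear operator on
`L_r(Ω, F, μ)` (`(Ω, F, μ)` sigma-finite, `1 ≤ r < ∞`), let `1 ≤ p < ∞` and
`f_1, …, f_n ∈ L_r(μ)`.  Then, almost everywhere,
`(∑_k |P f_k|^p)^{1/p} ≤ P((∑_k |f_k|^p)^{1/p})`. -/
theorem stmt_4 {Ω : Type*} [MeasurableSpace Ω] (μ : Measure Ω) [SigmaFinite μ]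
    (r : ENNReal) [Fact (1 ≤ r)] (hr : r ≠ ⊤)
    (P : Lp ℂ r μ →L[ℂ] Lp ℂ r μ)
    (hPpos : ∀ f : Lp ℂ r μ, 0 ≤ᵐ[μ] ⇑f → 0 ≤ᵐ[μ] ⇑(P f))
    (p : ℝ) (hp : 1 ≤ p)
    (n : ℕ) (f : Fin n → Lp ℂ r μ)
    -- `g` is the element of `L_r(μ)` representing the function `(∑_k |f_k|^p)^{1/p}`:
    (g : Lp ℂ r μ)
    (hg : ⇑g =ᵐ[μ] fun ω => (((∑ k, ‖f k ω‖ ^ p) ^ (1 / p) : ℝ) : ℂ)) :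
    ∀ᵐ ω ∂μ,
      ((((∑ k, ‖P (f k) ω‖ ^ p) ^ (1 / p) : ℝ)) : ℂ) ≤ P g ω := by
  classical
  -- consequences of positivity
  have hPim : ∀ w : Lp ℂ r μ, 0 ≤ᵐ[μ] ⇑w →
      ∀ᵐ ω ∂μ, 0 ≤ (P w ω).re ∧ (P w ω).im = 0 := by
    intro w hw
    filter_upwards [hPpos w hw] with ω h
    simp only [Pi.zero_apply] at h
    rw [Complex.nonneg_iff] at h
    exact ⟨h.1, h.2.symm⟩
  have hmono : ∀ u v : Lp ℂ r μ, ⇑u ≤ᵐ[μ] ⇑v → ∀ᵐ ω ∂μ, P u ω ≤ P v ω := by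
    intro u v huv
    have h0 : 0 ≤ᵐ[μ] ⇑(v - u) := by
      filter_upwards [Lp.coeFn_sub v u, huv] with ω h1 h2
      simp only [Pi.zero_apply]
      rw [h1, Pi.sub_apply, sub_nonneg]
      exact h2
    have h3 := hPpos _ h0
    have h4 : P (v - u) = P v - P u := map_sub P v u
    rw [h4] at h3
    filter_upwards [h3, Lp.coeFn_sub (P v) (P u)] with ω e1 e2
    simp only [Pi.zero_apply] at e1
    rw [e2, Pi.sub_apply, sub_nonneg] at e1
    exact e1
  -- `P` of a "real part" element is a.e. real
  have hPreL_real : ∀ u : Lp ℂ r μ, ∀ᵐ ω ∂μ, (P (reL u) ω).im = 0 := by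
    intro u
    have hmax : ∀ x : ℝ, max x 0 - max (-x) 0 = x := by
      intro x
      rcases le_total x 0 with h | h
      · rw [max_eq_right h, max_eq_left (neg_nonneg.mpr h)]; ring
      · rw [max_eq_left h, max_eq_right (neg_nonpos.mpr h)]; ring
    have hdec : reL u = posL u - posL (-u) := by
      apply Lp.ext
      filter_upwards [reL_coe u, posL_coe u, posL_coe (-u), Lp.coeFn_neg u,
        Lp.coeFn_sub (posL u) (posL (-u))] with ω e1 e2 e3 e4 e5
      rw [e1, e5, Pi.sub_apply, e2, e3, e4, Pi.neg_apply, Complex.neg_re,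
        ← Complex.ofReal_sub, hmax]
    have h2 : 0 ≤ᵐ[μ] ⇑(posL u) := by
      filter_upwards [posL_coe u] with ω e
      simp only [Pi.zero_apply]
      rw [e]
      exact Complex.zero_le_real.mpr (le_max_right _ _)
    have h3 : 0 ≤ᵐ[μ] ⇑(posL (-u)) := by
      filter_upwards [posL_coe (-u)] with ω e
      simp only [Pi.zero_apply]
      rw [e]
      exact Complex.zero_le_real.mpr (le_max_right _ _)
    have h1 : P (reL u) = P (posL u) - P (posL (-u)) := by rw [hdec, map_sub]
    filter_upwards [hPim _ h2, hPim _ h3,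
      Lp.coeFn_sub (P (posL u)) (P (posL (-u)))] with ω e1 e2 e3
    rw [h1, e3, Pi.sub_apply, Complex.sub_im, e1.2, e2.2, sub_zero]
  -- the countable family of a.e. inequalities
  have key : ∀ d : (Fin n → ℚ × ℚ) × ℚ, ∀ᵐ ω ∂μ,
      (((0:ℝ) ≤ (d.2:ℝ)) ∧ ∀ b : Fin n → ℂ, (∑ k, ratC (d.1 k) * b k).re
           ≤ (d.2:ℝ) * (∑ k, ‖b k‖ ^ p) ^ (1/p)) →
      (∑ k, ratC (d.1 k) * (P (f k) ω)).re ≤ (d.2:ℝ) * (P g ω).re := by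
    rintro ⟨q, s⟩
    by_cases hU : ((0:ℝ) ≤ (s:ℝ)) ∧ ∀ b : Fin n → ℂ, (∑ k, ratC (q k) * b k).re
           ≤ (s:ℝ) * (∑ k, ‖b k‖ ^ p) ^ (1/p)
    swap
    · exact Eventually.of_forall fun ω hcond => absurd hcond hU
    obtain ⟨hs0, hU⟩ := hU
    set c : Fin n → ℂ := fun k => ratC (q k) with hc
    set u : Lp ℂ r μ := ∑ k, c k • f k with hu
    have hco : ⇑u =ᵐ[μ] fun ω => ∑ k, c k * f k ω := by
      have h1 := Lp_coeFn_sum Finset.univ (fun k => c k • f k)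
      have h2 : ∀ᵐ ω ∂μ, ∀ k : Fin n, (c k • f k) ω = c k * f k ω :=
        ae_all_iff.mpr fun k => by
          filter_upwards [Lp.coeFn_smul (c k) (f k)] with ω e
          rw [e, Pi.smul_apply, smul_eq_mul]
      filter_upwards [h1, h2] with ω e1 e2
      rw [hu, e1]
      exact Finset.sum_congr rfl fun k _ => e2 k
    set m : Lp ℂ r μ := ((s:ℝ):ℂ) • g with hm
    have hle : ⇑(reL u) ≤ᵐ[μ] ⇑m := by
      filter_upwards [reL_coe u, hco, Lp.coeFn_smul (((s:ℝ):ℂ)) g, hg]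
        with ω e1 e2 e3 e4
      rw [e1, hm, e3, Pi.smul_apply, e4, smul_eq_mul, ← Complex.ofReal_mul,
        Complex.real_le_real, e2]
      exact hU (fun k => f k ω)
    have hmono1 := hmono _ _ hle
    have hreal1 := hPreL_real u
    set u2 : Lp ℂ r μ := reL ((-Complex.I) • u) with hu2
    have hreal2 := hPreL_real ((-Complex.I) • u)
    have hdec : u = reL u + Complex.I • u2 := by
      apply Lp.ext
      filter_upwards [reL_coe u, reL_coe ((-Complex.I) • u), Lp.coeFn_smul (-Complex.I) u,
        Lp.coeFn_add (reL u) (Complex.I • u2), Lp.coeFn_smul Complex.I u2]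
        with ω e1 e2 e3 e4 e5
      rw [e4, Pi.add_apply, e1, e5, Pi.smul_apply, smul_eq_mul, hu2, e2, e3,
        Pi.smul_apply, smul_eq_mul]
      have him : ((-Complex.I) * (u ω)).re = (u ω).im := by
        simp [Complex.mul_re]
      rw [him, mul_comm]
      exact (Complex.re_add_im _).symm
    have hPdec : P u = P (reL u) + Complex.I • P u2 := by
      conv_lhs => rw [hdec]
      rw [map_add, P.map_smul]
    have hPsum : P u = ∑ k, c k • P (f k) := by
      rw [hu, map_sum]
      exact Finset.sum_congr rfl fun k _ => map_smul P (c k) (f k)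
    have hPsumco : ⇑(P u) =ᵐ[μ] fun ω => ∑ k, c k * (P (f k) ω) := by
      rw [hPsum]
      have h1 := Lp_coeFn_sum Finset.univ (fun k => c k • P (f k))
      have h2 : ∀ᵐ ω ∂μ, ∀ k : Fin n, (c k • P (f k)) ω = c k * P (f k) ω :=
        ae_all_iff.mpr fun k => by
          filter_upwards [Lp.coeFn_smul (c k) (P (f k))] with ω e
          rw [e, Pi.smul_apply, smul_eq_mul]
      filter_upwards [h1, h2] with ω e1 e2
      rw [e1]
      exact Finset.sum_congr rfl fun k _ => e2 k
    have hPm : P m = ((s:ℝ):ℂ) • P g := by rw [hm]; exact P.map_smul _ _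
    filter_upwards [hPsumco, hmono1, hreal1, hreal2,
      Lp.coeFn_add (P (reL u)) (Complex.I • P u2),
      Lp.coeFn_smul Complex.I (P u2), Lp.coeFn_smul (((s:ℝ):ℂ)) (P g)]
      with ω e1 e2 e3 e4 e5 e6 e7
    intro _
    have E1 : (∑ k, c k * P (f k) ω) = P u ω := e1.symm
    have E2 : (P u ω).re = (P (reL u) ω).re := by
      rw [hPdec, e5, Pi.add_apply, e6, Pi.smul_apply, smul_eq_mul, Complex.add_re,
        Complex.mul_re]
      rw [← hu2] at e4
      simp [Complex.I_re, Complex.I_im, e4]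
    have E3 : (P (reL u) ω).re ≤ (P m ω).re := (Complex.le_def.mp e2).1
    have E4 : (P m ω).re = (s:ℝ) * (P g ω).re := by
      rw [hPm, e7, Pi.smul_apply, smul_eq_mul, Complex.re_ofReal_mul]
    calc (∑ k, ratC (q k) * P (f k) ω).re = (P u ω).re := by rw [← E1]
      _ = (P (reL u) ω).re := E2
      _ ≤ (P m ω).re := E3
      _ = (s:ℝ) * (P g ω).re := E4
  -- assemble
  have hgnn : 0 ≤ᵐ[μ] ⇑g := by
    filter_upwards [hg] with ω e
    simp only [Pi.zero_apply]
    rw [e]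
    refine Complex.zero_le_real.mpr (Real.rpow_nonneg ?_ _)
    exact Finset.sum_nonneg fun k _ => Real.rpow_nonneg (norm_nonneg _) _
  have hPg := hPim g hgnn
  have hall := ae_all_iff.mpr key
  filter_upwards [hall, hPg] with ω hω hPgω
  have hN := pointwise_dual hp (fun k => P (f k) ω) hPgω.1
      (fun q s hs hUU => hω (q, s) ⟨hs, hUU⟩)
  rw [Complex.le_def]
  constructor
  · simpa using hN
  · simp [hPgω.2]

end
end

section
/- For $M\in\mathbb N$ let $C_M$ be the $M\times M$ nilpotent shift matrix with $(C_M)_{j,j+1}=1$ for $1\le j\le M-1$ and all other entries $0$, acting on $\ell_2^M$. If $\lambda\in\mathbb C$ with $|\lambda|=1$, then the operator norm satisfies $\|(\lambda - C_M)^{-1}\| \ge \sqrt M$. -/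
open Matrix
open scoped ComplexOrder

noncomputable section

/-- The `M × M` nilpotent shift matrix `C_M`, with `(C_M)_{j, j+1} = 1` and all other
entries `0`. -/
def CM (M : ℕ) : Matrix (Fin M) (Fin M) ℂ :=
  fun i j => if (j : ℕ) = (i : ℕ) + 1 then 1 else 0

/-- If `|λ| = 1`, then the operator norm of `(λ - C_M)⁻¹` on
`ℓ_2^M` is at least `√M`. -/
theorem stmt_10 (M : ℕ) (hM : 0 < M) (lam : ℂ) (hlam : ‖lam‖ = 1) :
    Real.sqrt M ≤
      ‖Matrix.toEuclideanCLM (𝕜 := ℂ)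
        ((lam • (1 : Matrix (Fin M) (Fin M) ℂ) - CM M)⁻¹)‖ := by
  have hlam0 : lam ≠ 0 := by
    intro h; rw [h] at hlam; simp at hlam
  set A : Matrix (Fin M) (Fin M) ℂ := lam • (1 : Matrix (Fin M) (Fin M) ℂ) - CM M with hA
  -- A is upper triangular with diagonal lam
  have htri : A.BlockTriangular id := by
    intro i j hij
    simp only [hA, Matrix.sub_apply, Matrix.smul_apply, Matrix.one_apply, CM]
    have h1 : i ≠ j := fun h => by subst h; exact lt_irrefl _ hij
    have h2 : (j : ℕ) ≠ (i : ℕ) + 1 := by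
      have : (j : ℕ) < (i : ℕ) := hij
      omega
    simp [h1, h2]
  have hdet : A.det = lam ^ M := by
    rw [Matrix.det_of_upperTriangular htri]
    have : ∀ i : Fin M, A i i = lam := by
      intro i
      simp [hA, CM, Matrix.one_apply]
    simp [this]
  have hunit : IsUnit A.det := by
    rw [hdet]; exact (isUnit_iff_ne_zero.mpr (pow_ne_zero _ hlam0))
  -- test vector v i = lam ^ i
  set v : Fin M → ℂ := fun i => lam ^ (i : ℕ) with hv
  set e : Fin M → ℂ := Pi.single (⟨M - 1, by omega⟩ : Fin M) 1 with he
  have hmul : A.mulVec v = (lam ^ M) • e := by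
    funext i
    simp only [Matrix.mulVec, dotProduct, hA, Matrix.sub_apply, Matrix.smul_apply,
      Matrix.one_apply, CM, Pi.smul_apply, he]
    simp only [sub_mul, smul_eq_mul]
    rw [Finset.sum_sub_distrib]
    have h1 : ∑ j : Fin M, (lam * if i = j then (1:ℂ) else 0) * v j = lam ^ ((i:ℕ)+1) := by
      rw [Finset.sum_eq_single i]
      · simp [hv, pow_succ, mul_comm]
      · intro b _ hb; simp [Ne.symm hb]
      · simp
    rw [h1]
    by_cases hlast : (i : ℕ) = M - 1
    · have h2 : ∑ j : Fin M, (if (j:ℕ) = (i:ℕ)+1 then (1:ℂ) else 0) * v j = 0 := by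
        apply Finset.sum_eq_zero
        intro j _
        have : (j : ℕ) ≠ (i : ℕ) + 1 := by omega
        simp [this]
      rw [h2]
      have : i = (⟨M - 1, by omega⟩ : Fin M) := by
        apply Fin.ext; exact hlast
      rw [this]
      simp only [Pi.single_eq_same, smul_eq_mul]
      have h3 : M - 1 + 1 = M := by omega
      rw [h3]
      ring
    · have hi1 : (i : ℕ) + 1 < M := by omega
      have h2 : ∑ j : Fin M, (if (j:ℕ) = (i:ℕ)+1 then (1:ℂ) else 0) * v j
          = lam ^ ((i:ℕ)+1) := by
        rw [Finset.sum_eq_single (⟨(i:ℕ)+1, hi1⟩ : Fin M)]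
        · simp [hv]
        · intro j _ hj
          have : (j : ℕ) ≠ (i : ℕ) + 1 := fun h => hj (Fin.ext h)
          simp [this]
        · simp
      rw [h2]
      have : i ≠ (⟨M - 1, by omega⟩ : Fin M) := fun h => hlast (by rw [h])
      rw [Pi.single_eq_of_ne this]
      simp
  have hinv : A⁻¹.mulVec e = (lam ^ M)⁻¹ • v := by
    have := congrArg (fun w => A⁻¹.mulVec w) hmul
    simp only [Matrix.mulVec_mulVec, Matrix.nonsing_inv_mul A hunit, Matrix.one_mulVec,
      Matrix.mulVec_smul] at this
    exact (eq_inv_smul_iff₀ (pow_ne_zero M hlam0)).mpr this.symm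
  -- now compute norms
  set T := Matrix.toEuclideanCLM (𝕜 := ℂ) A⁻¹ with hT
  have happ : T ((WithLp.equiv 2 _).symm e) = (WithLp.equiv 2 _).symm ((lam ^ M)⁻¹ • v) := by
    rw [hT]; exact congrArg (WithLp.equiv 2 _).symm hinv
  have hnorme : ‖(WithLp.equiv 2 (Fin M → ℂ)).symm e‖ = 1 := by
    rw [EuclideanSpace.norm_eq]
    have : ∀ i : Fin M, ‖((WithLp.equiv 2 (Fin M → ℂ)).symm e) i‖ ^ 2
        = if i = (⟨M - 1, by omega⟩ : Fin M) then 1 else 0 := by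
      intro i
      by_cases h : i = (⟨M - 1, by omega⟩ : Fin M) <;> simp [he, h, Pi.single_eq_of_ne]
    rw [Finset.sum_congr rfl (fun i _ => this i)]
    simp
  have hnormv : ‖(WithLp.equiv 2 (Fin M → ℂ)).symm ((lam ^ M)⁻¹ • v)‖ = Real.sqrt M := by
    rw [EuclideanSpace.norm_eq]
    have : ∀ i : Fin M, ‖((WithLp.equiv 2 (Fin M → ℂ)).symm ((lam ^ M)⁻¹ • v)) i‖ ^ 2 = 1 := by
      intro i
      have : ‖(lam ^ M)⁻¹ * lam ^ (i:ℕ)‖ = 1 := by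
        rw [norm_mul, norm_inv, norm_pow, norm_pow]
        simp only [hlam]
        simp
      simp only [WithLp.equiv_symm_apply, WithLp.ofLp_toLp, Pi.smul_apply, smul_eq_mul, hv]
      rw [this]; norm_num
    rw [Finset.sum_congr rfl (fun i _ => this i)]
    simp
  calc Real.sqrt M = ‖T ((WithLp.equiv 2 _).symm e)‖ := by rw [happ, hnormv]
    _ ≤ ‖T‖ * ‖(WithLp.equiv 2 (Fin M → ℂ)).symm e‖ := T.le_opNorm _
    _ = ‖T‖ := by rw [hnorme, mul_one]
end
end
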